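/- Let θ ∈ (0,1) ∪ (1,2) be a real number and define s_θ(x) = ⌈(x/2)^{1/θ}⌉ if 0 < θ < 1 and s_θ(x) = ⌊(x/2)^{1/θ}⌋ if 1 < θ < 2. There exist constants N > 0 and C > 0 (depending only on θ) such that for all real x ≥ N there is a unique real number t ∈ [0, s_θ(x)] satisfying (s_θ(x) + t)^θ + (s_θ(x) − t)^θ = x, and moreover this t satisfies t ≤ C · x^{1/(2θ)}. -/

import Mathlib

/-!
Put `ψ r = (θ - 1) * r ^ θ` and `G t = ψ (S + t) + ψ (S - t)`, so that the equation reads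
`G t = (θ - 1) * x`. For `0 < θ ≤ 2` the second derivative `θ (θ - 1)² r ^ (θ - 2)` of `ψ`
is at least `m = θ (θ - 1)² R ^ (θ - 2)` on `[0, R]`, hence `ψ - m r² / 2` is convex there and
`G v - G u ≥ m (v² - u²)`: `G` is strictly increasing, with quadratic growth.
With `y = (x / 2) ^ (1 / θ)`, the choice of ceiling or floor makes `(θ - 1) (y - S) ≥ 0` and
`|y - S| ≤ 1`, so by the tangent-line inequality for `ψ` the defect
`(θ - 1) x - G 0 = 2 (ψ y - ψ S)` is nonnegative and `O(y ^ (θ - 1))`. Taking `R = 4 y` this is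
at most `m · O(y)`, which gives `t² = O(y)` for any solution `t`, and, once `y` is large, also
`G S ≥ (θ - 1) x`, so that a solution exists.
-/

/-- `sTheta θ x` : ⌈(x/2)^{1/θ}⌉ if θ < 1 and ⌊(x/2)^{1/θ}⌋ otherwise. -/
noncomputable def sTheta (θ x : ℝ) : ℤ :=
  if θ < 1 then ⌈(x / 2) ^ θ⁻¹⌉ else ⌊(x / 2) ^ θ⁻¹⌋

open Real Set

theorem ConvexOn.add_mul_sub_le_of_hasDerivAt {s : Set ℝ} {f : ℝ → ℝ} {f' x y : ℝ}
    (hf : ConvexOn ℝ s f) (hx : x ∈ s) (hy : y ∈ s) (hd : HasDerivAt f f' x) :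
    f x + f' * (y - x) ≤ f y := by
  rcases lt_trichotomy x y with hxy | rfl | hxy
  · have := hf.le_slope_of_hasDerivAt hx hy hxy hd
    rw [slope_def_field, le_div_iff₀ (sub_pos.2 hxy)] at this
    linarith
  · simp
  · have := hf.slope_le_of_hasDerivAt hy hx hxy hd
    rw [slope_def_field, div_le_iff₀ (sub_pos.2 hxy)] at this
    linarith

theorem ConvexOn.map_add_add_map_sub_le {s : Set ℝ} {f : ℝ → ℝ} (hf : ConvexOn ℝ s f)
    {a u v : ℝ} (huv : |u| ≤ v) (hneg : a - v ∈ s) (hpos : a + v ∈ s) :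
    f (a + u) + f (a - u) ≤ f (a + v) + f (a - v) := by
  obtain ⟨hu₁, hu₂⟩ := abs_le.1 huv
  rcases (abs_nonneg u).trans huv |>.eq_or_lt with hv | hv
  · obtain rfl : u = 0 := by simpa [← hv] using huv
    simp [← hv]
  -- `a + u` and `a - u` are the convex combinations of `a - v` and `a + v` with weights
  -- `(l, 1 - l)` and `(1 - l, l)`.
  set l := (v - u) / (2 * v)
  have hl₀ : 0 ≤ l := div_nonneg (by linarith) (by linarith)
  have hl₁ : 0 ≤ 1 - l := by
    rw [sub_nonneg, div_le_one (by linarith)]; linarith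
  have h₁ := hf.2 hneg hpos hl₀ hl₁ (by ring)
  have h₂ := hf.2 hneg hpos hl₁ hl₀ (by ring)
  have e₁ : l • (a - v) + (1 - l) • (a + v) = a + u := by
    simp only [smul_eq_mul, l]; field_simp; ring
  have e₂ : (1 - l) • (a - v) + l • (a + v) = a - u := by
    simp only [smul_eq_mul, l]; field_simp; ring
  rw [e₁] at h₁
  rw [e₂] at h₂
  simp only [smul_eq_mul] at h₁ h₂
  linarith

theorem convexOn_rpow_sub_sq {θ R m : ℝ} (hθ₀ : 0 < θ) (hθ₂ : θ ≤ 2)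
    (hm : m ≤ θ * (θ - 1) ^ 2 * R ^ (θ - 2)) :
    ConvexOn ℝ (Icc 0 R) fun r => (θ - 1) * r ^ θ - m / 2 * r ^ 2 := by
  refine convexOn_of_hasDerivWithinAt2_nonneg (convex_Icc 0 R)
    (f' := fun r => θ * (θ - 1) * r ^ (θ - 1) - m * r)
    (f'' := fun r => θ * (θ - 1) ^ 2 * r ^ (θ - 2) - m) ?_ ?_ ?_ ?_
  · exact (continuous_const.mul (continuous_id.rpow_const fun _ => Or.inr hθ₀.le)
      |>.sub (by fun_prop)).continuousOn
  all_goals rw [interior_Icc]; rintro r ⟨hr₀, hrR⟩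
  · refine HasDerivAt.hasDerivWithinAt ?_
    refine (((hasDerivAt_rpow_const (p := θ) (Or.inl hr₀.ne')).const_mul (θ - 1)).sub
      ((hasDerivAt_pow 2 r).const_mul (m / 2))).congr_deriv ?_
    push_cast; ring
  · refine HasDerivAt.hasDerivWithinAt ?_
    refine (((hasDerivAt_rpow_const (p := θ - 1) (Or.inl hr₀.ne')).const_mul
      (θ * (θ - 1))).sub ((hasDerivAt_id r).const_mul m)).congr_deriv ?_
    rw [sub_sub, one_add_one_eq_two]; simp only [mul_one]; ring
  · have := rpow_le_rpow_of_nonpos hr₀ hrR.le (sub_nonpos.2 hθ₂)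
    have := mul_le_mul_of_nonneg_left this (by positivity : 0 ≤ θ * (θ - 1) ^ 2)
    simp only [sub_nonneg]
    linarith

theorem mul_rpow_tangent_le {θ a b : ℝ} (hθ₀ : 0 < θ) (hθ₂ : θ ≤ 2) (ha : 0 < a) (hb : 0 ≤ b) :
    (θ - 1) * a ^ θ + θ * a ^ (θ - 1) * ((θ - 1) * (b - a)) ≤ (θ - 1) * b ^ θ := by
  have hconv : ConvexOn ℝ (Icc 0 (a + b)) fun r => (θ - 1) * r ^ θ := by
    simpa using convexOn_rpow_sub_sq (R := a + b) (m := 0) hθ₀ hθ₂ (by positivity)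
  have hd : HasDerivAt (fun r => (θ - 1) * r ^ θ) ((θ - 1) * (θ * a ^ (θ - 1))) a :=
    (hasDerivAt_rpow_const (Or.inl ha.ne')).const_mul _
  have := hconv.add_mul_sub_le_of_hasDerivAt ⟨ha.le, by linarith⟩ ⟨hb, by linarith⟩ hd
  linarith

theorem mul_sq_sub_sq_le_rpow_sum_sub {θ S R u v : ℝ} (hθ₀ : 0 < θ) (hθ₂ : θ ≤ 2)
    (hu : 0 ≤ u) (huv : u ≤ v) (hvS : v ≤ S) (hSR : 2 * S ≤ R) :
    θ * (θ - 1) ^ 2 * R ^ (θ - 2) * (v ^ 2 - u ^ 2) ≤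
      (θ - 1) * ((S + v) ^ θ + (S - v) ^ θ - ((S + u) ^ θ + (S - u) ^ θ)) := by
  have := (convexOn_rpow_sub_sq (R := R) hθ₀ hθ₂ le_rfl).map_add_add_map_sub_le (a := S)
    (abs_le.2 ⟨by linarith, huv⟩) ⟨by linarith, by linarith⟩ ⟨by linarith, by linarith⟩
  linarith

theorem rpow_sub_one_le_rpow_sub_two_mul {θ y : ℝ} (hθ : 0 ≤ θ) (hy : 0 < y) :
    y ^ (θ - 1) ≤ 16 * (4 * y) ^ (θ - 2) * y := by
  have h4 : (1 : ℝ) ≤ 16 * 4 ^ (θ - 2) := by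
    rw [rpow_sub (by norm_num), rpow_two]
    have := one_le_rpow (by norm_num : (1 : ℝ) ≤ 4) hθ
    field_simp
    linarith
  calc y ^ (θ - 1) ≤ 16 * 4 ^ (θ - 2) * y ^ (θ - 1) := le_mul_of_one_le_left (by positivity) h4
    _ = 16 * (4 * y) ^ (θ - 2) * y := by
      rw [mul_rpow (by norm_num) hy.le, show θ - 1 = θ - 2 + 1 by ring, rpow_add_one hy.ne']
      ring

theorem mul_rpow_sub_rpow_nonneg {θ S y : ℝ} (hθ₀ : 0 < θ) (hθ₂ : θ ≤ 2) (hS : 0 < S)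
    (hy : 0 ≤ y) (hsign : 0 ≤ (θ - 1) * (y - S)) :
    0 ≤ (θ - 1) * (y ^ θ - S ^ θ) := by
  have := mul_rpow_tangent_le hθ₀ hθ₂ hS hy
  have : 0 ≤ θ * S ^ (θ - 1) * ((θ - 1) * (y - S)) := by positivity
  linarith

theorem abs_mul_mul_rpow_sub_rpow_le {θ S y : ℝ} (hθ₀ : 0 < θ) (hθ₂ : θ ≤ 2) (hS : 0 ≤ S)
    (hy : 0 < y) (hyS : |y - S| ≤ 1) :
    |θ - 1| * ((θ - 1) * (y ^ θ - S ^ θ)) ≤ θ * (θ - 1) ^ 2 * (4 * y) ^ (θ - 2) * (16 * y) := by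
  have htan := mul_rpow_tangent_le hθ₀ hθ₂ hy hS
  have hlin : (θ - 1) * (y - S) ≤ |θ - 1| :=
    calc (θ - 1) * (y - S) ≤ |θ - 1| * |y - S| := by rw [← abs_mul]; exact le_abs_self _
      _ ≤ |θ - 1| := mul_le_of_le_one_right (abs_nonneg _) hyS
  have hpos : 0 ≤ θ * y ^ (θ - 1) := by positivity
  calc |θ - 1| * ((θ - 1) * (y ^ θ - S ^ θ)) ≤ |θ - 1| * (θ * y ^ (θ - 1) * |θ - 1|) :=
        mul_le_mul_of_nonneg_left (by nlinarith [mul_le_mul_of_nonneg_left hlin hpos])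
          (abs_nonneg _)
    _ = θ * (θ - 1) ^ 2 * y ^ (θ - 1) := by rw [← sq_abs (θ - 1)]; ring
    _ ≤ θ * (θ - 1) ^ 2 * (16 * (4 * y) ^ (θ - 2) * y) := by
        gcongr; exact rpow_sub_one_le_rpow_sub_two_mul hθ₀.le hy
    _ = θ * (θ - 1) ^ 2 * (4 * y) ^ (θ - 2) * (16 * y) := by ring

theorem strictMonoOn_mul_rpow_add_rpow_sub {θ S : ℝ} (hθ₀ : 0 < θ) (hθ₂ : θ ≤ 2) (hθ₁ : θ ≠ 1)
    (hS : 0 < S) :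
    StrictMonoOn (fun t => (θ - 1) * ((S + t) ^ θ + (S - t) ^ θ)) (Icc 0 S) := by
  intro u hu v hv huv
  have := mul_sq_sub_sq_le_rpow_sum_sub (R := 2 * S) hθ₀ hθ₂ hu.1 huv.le hv.2 le_rfl
  have : 0 < θ * (θ - 1) ^ 2 * (2 * S) ^ (θ - 2) * (v ^ 2 - u ^ 2) := by
    have := sub_ne_zero.2 hθ₁
    have : 0 < v ^ 2 - u ^ 2 := by nlinarith [hu.1]
    positivity
  simp only
  linarith

theorem existsUnique_rpow_sum_eq_and_sq_le {θ S y : ℝ} (hθ₀ : 0 < θ) (hθ₂ : θ ≤ 2)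
    (hθ₁ : θ ≠ 1) (hy : 128 ≤ |θ - 1| * y) (hyS : |y - S| ≤ 1)
    (hsign : 0 ≤ (θ - 1) * (y - S)) :
    (∃! t, t ∈ Icc 0 S ∧ (S + t) ^ θ + (S - t) ^ θ = 2 * y ^ θ) ∧
      ∀ t ∈ Icc 0 S, (S + t) ^ θ + (S - t) ^ θ = 2 * y ^ θ → |θ - 1| * t ^ 2 ≤ 32 * y := by
  have hθ₁' : θ - 1 ≠ 0 := sub_ne_zero.2 hθ₁
  have habs : |θ - 1| ≤ 1 := abs_le.2 ⟨by linarith, by linarith⟩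
  have hy₀ : 0 < y := pos_of_mul_pos_right (by linarith : 0 < |θ - 1| * y) (abs_nonneg _)
  have hy₁ : 128 ≤ y := by nlinarith [mul_le_mul_of_nonneg_right habs hy₀.le]
  obtain ⟨hyS₁, hyS₂⟩ := abs_le.1 hyS
  have hS : 0 < S := by linarith
  set m := θ * (θ - 1) ^ 2 * (4 * y) ^ (θ - 2)
  have hm : 0 < m := by positivity
  set G := fun t => (θ - 1) * ((S + t) ^ θ + (S - t) ^ θ)
  have hG : ∀ t ∈ Icc 0 S, m * t ^ 2 ≤ G t - G 0 := fun t ht => by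
    have := mul_sq_sub_sq_le_rpow_sum_sub (R := 4 * y) hθ₀ hθ₂ le_rfl ht.1 ht.2 (by linarith)
    simp only [G]; linarith
  set defect := (θ - 1) * (y ^ θ - S ^ θ)
  have hdefect₀ : 0 ≤ defect := mul_rpow_sub_rpow_nonneg hθ₀ hθ₂ hS hy₀.le hsign
  have hdefect₁ : |θ - 1| * defect ≤ m * (16 * y) :=
    abs_mul_mul_rpow_sub_rpow_le hθ₀ hθ₂ hS.le hy₀ hyS
  have hG₀ : G 0 = (θ - 1) * (2 * y ^ θ) - 2 * defect := by
    simp only [G, defect, add_zero, sub_zero]; ring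
  have hbound : ∀ t ∈ Icc 0 S, G t = (θ - 1) * (2 * y ^ θ) → |θ - 1| * t ^ 2 ≤ 32 * y := by
    intro t ht hGt
    refine le_of_mul_le_mul_left ?_ hm
    calc m * (|θ - 1| * t ^ 2) = |θ - 1| * (m * t ^ 2) := by ring
      _ ≤ |θ - 1| * (2 * defect) :=
        mul_le_mul_of_nonneg_left (by linarith [hG t ht]) (abs_nonneg _)
      _ ≤ m * (32 * y) := by linarith
  have hGS : (θ - 1) * (2 * y ^ θ) ≤ G S := by
    have hS₂ : 32 * y ≤ |θ - 1| * S ^ 2 :=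
      calc 32 * y ≤ |θ - 1| * y * y / 4 := by nlinarith
        _ = |θ - 1| * (y / 2) ^ 2 := by ring
        _ ≤ |θ - 1| * S ^ 2 := by gcongr; linarith
    have : 2 * defect ≤ m * S ^ 2 := by
      refine le_of_mul_le_mul_left ?_ (abs_pos.2 hθ₁')
      nlinarith
    linarith [hG S ⟨hS.le, le_rfl⟩]
  have hGcont : ContinuousOn G (Icc 0 S) := by
    have := continuous_rpow_const hθ₀.le
    fun_prop
  have hG_iff : ∀ t, G t = (θ - 1) * (2 * y ^ θ) ↔ (S + t) ^ θ + (S - t) ^ θ = 2 * y ^ θ :=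
    fun t => mul_right_inj' hθ₁'
  obtain ⟨t, ht, hGt⟩ := intermediate_value_Icc hS.le hGcont ⟨by linarith, hGS⟩
  refine ⟨⟨t, ⟨ht, (hG_iff t).1 hGt⟩, fun t' ⟨ht', h⟩ => ?_⟩,
    fun t ht h => hbound t ht ((hG_iff t).2 h)⟩
  exact (strictMonoOn_mul_rpow_add_rpow_sub hθ₀ hθ₂ hθ₁ hS).injOn ht' ht
    (((hG_iff t').2 h).trans hGt.symm)

theorem abs_sub_sTheta_le (θ x : ℝ) : |(x / 2) ^ θ⁻¹ - sTheta θ x| ≤ 1 := by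
  rw [abs_sub_le_iff, sTheta]
  split_ifs
  · constructor <;> linarith [Int.le_ceil ((x / 2) ^ θ⁻¹), Int.ceil_lt_add_one ((x / 2) ^ θ⁻¹)]
  · constructor <;> linarith [Int.floor_le ((x / 2) ^ θ⁻¹), Int.lt_floor_add_one ((x / 2) ^ θ⁻¹)]

theorem mul_sub_sTheta_nonneg (θ x : ℝ) : 0 ≤ (θ - 1) * ((x / 2) ^ θ⁻¹ - sTheta θ x) := by
  rw [sTheta]
  split_ifs with hθ
  · exact mul_nonneg_of_nonpos_of_nonpos (by linarith) (by linarith [Int.le_ceil ((x / 2) ^ θ⁻¹)])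
  · exact mul_nonneg (by linarith) (by linarith [Int.floor_le ((x / 2) ^ θ⁻¹)])

theorem le_sqrt_mul_rpow_of_sq_le {t c x θ : ℝ} (hx : 0 ≤ x) (h : t ^ 2 ≤ c * x ^ θ⁻¹) :
    t ≤ √c * x ^ (1 / (2 * θ)) := by
  calc t ≤ √(t ^ 2) := by rw [sqrt_sq_eq_abs]; exact le_abs_self t
    _ ≤ √(c * x ^ θ⁻¹) := sqrt_le_sqrt h
    _ = √c * x ^ (1 / (2 * θ)) := by
      rw [sqrt_mul' _ (by positivity), sqrt_eq_rpow (x ^ θ⁻¹), ← rpow_mul hx]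
      congr 2
      ring

theorem stmt_18 (θ : ℝ) (hθ : θ ∈ Set.Ioo (0 : ℝ) 1 ∪ Set.Ioo (1 : ℝ) 2) :
    ∃ N C : ℝ, 0 < N ∧ 0 < C ∧ ∀ x : ℝ, N ≤ x →
      (∃! t : ℝ, t ∈ Set.Icc (0 : ℝ) ((sTheta θ x : ℤ) : ℝ) ∧
        (((sTheta θ x : ℤ) : ℝ) + t) ^ θ + (((sTheta θ x : ℤ) : ℝ) - t) ^ θ = x) ∧
      (∀ t : ℝ, t ∈ Set.Icc (0 : ℝ) ((sTheta θ x : ℤ) : ℝ) →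
        (((sTheta θ x : ℤ) : ℝ) + t) ^ θ + (((sTheta θ x : ℤ) : ℝ) - t) ^ θ = x →
          t ≤ C * x ^ (1 / (2 * θ))) := by
  obtain ⟨hθ₀, hθ₂, hθ₁⟩ : 0 < θ ∧ θ ≤ 2 ∧ θ ≠ 1 := by
    rcases hθ with ⟨h₀, h₁⟩ | ⟨h₀, h₁⟩
    exacts [⟨h₀, by linarith, h₁.ne⟩, ⟨by linarith, h₁.le, h₀.ne'⟩]
  have habs : 0 < |θ - 1| := abs_pos.2 (sub_ne_zero.2 hθ₁)
  refine ⟨2 * (128 / |θ - 1|) ^ θ, √(32 / |θ - 1|), by positivity, by positivity, fun x hx => ?_⟩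
  have hx₀ : 0 < x := lt_of_lt_of_le (by positivity) hx
  set y := (x / 2) ^ θ⁻¹
  have hxy : 2 * y ^ θ = x := by rw [rpow_inv_rpow (by positivity) hθ₀.ne']; ring
  have hy : 128 ≤ |θ - 1| * y := by
    rw [← div_le_iff₀' habs, ← rpow_rpow_inv (by positivity : 0 ≤ 128 / |θ - 1|) hθ₀.ne']
    exact rpow_le_rpow (by positivity) (by linarith) (by positivity)
  obtain ⟨hunique, hbound⟩ := existsUnique_rpow_sum_eq_and_sq_le hθ₀ hθ₂ hθ₁ hy
    (abs_sub_sTheta_le θ x) (mul_sub_sTheta_nonneg θ x)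
  rw [hxy] at hunique hbound
  refine ⟨hunique, fun t ht h => le_sqrt_mul_rpow_of_sq_le hx₀.le ?_⟩
  have hyx : y ≤ x ^ θ⁻¹ := rpow_le_rpow (by positivity) (by linarith) (by positivity)
  rw [div_mul_eq_mul_div, le_div_iff₀' habs]
  linarith [hbound t ht h]
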